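/- arXiv:1809.03257 — 4 statements merged into one kernel-verified Lean document; each statement's English description precedes it below -/
import Mathlib

section
/- For the one-dimensional M1 dynamics started from any initial state with position x₀ = 0, any hand arrow h₀ ∈ {−1,+1} and any environment a₀ : ℤ → {−1,+1}, the position after n steps satisfies |Y_n| ≥ ⌊(n−2)/3⌋ for every n ∈ ℕ (where ⌊·⌋ is the integer floor, so the bound is vacuous for n ≤ 2). In particular the discrete-time M1 walk in one dimension is ballistic, with speed at least 1/3. -/
/-- A state of the one-dimensional M1 dynamics: the walker's position, the
arrow in its hand, and the environment of site arrows. -/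
structure M1State where
  pos : ℤ
  hand : ℤ
  env : ℤ → ℤ

/-- One step of the M1 dynamics: the walker moves one unit in the direction of
its hand arrow, then exchanges its hand arrow with the arrow at its new site. -/
def M1Step (s : M1State) : M1State where
  pos := s.pos + s.hand
  hand := s.env (s.pos + s.hand)
  env := Function.update s.env (s.pos + s.hand) s.hand

/-- All arrows in the environment are `±1`. -/
def M1Pm (s : M1State) : Prop := ∀ x : ℤ, s.env x = 1 ∨ s.env x = -1

/-- The phase classification of reachable states at time `n ≥ 1`. -/
def M1Ph (n : ℤ) (s : M1State) : Prop :=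
  (s.hand = 1 ∧ s.env s.pos = 1 ∧ n ≤ 3 * s.pos + 2) ∨
  (s.hand = -1 ∧ s.env s.pos = 1 ∧ s.env (s.pos - 1) = 1 ∧ n ≤ 3 * s.pos) ∨
  (s.hand = 1 ∧ s.env (s.pos + 1) = 1 ∧ n ≤ 3 * s.pos + 4) ∨
  (s.hand = -1 ∧ s.env s.pos = -1 ∧ n ≤ -3 * s.pos + 2) ∨
  (s.hand = 1 ∧ s.env s.pos = -1 ∧ s.env (s.pos + 1) = -1 ∧ n ≤ -3 * s.pos) ∨
  (s.hand = -1 ∧ s.env (s.pos - 1) = -1 ∧ n ≤ -3 * s.pos + 4)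

lemma m1_ph_hand {n : ℤ} {s : M1State} (h : M1Ph n s) : s.hand = 1 ∨ s.hand = -1 := by
  rcases h with h | h | h | h | h | h <;> [left; right; left; right; left; right] <;> exact h.1

lemma m1_pm_step {s : M1State} (hPm : M1Pm s) (hh : s.hand = 1 ∨ s.hand = -1) :
    M1Pm (M1Step s) := by
  intro x
  simp only [M1Step, Function.update_apply]
  split_ifs
  · exact hh
  · exact hPm x

lemma m1_ph_step {n : ℤ} {s : M1State} (hPm : M1Pm s) (hPh : M1Ph n s) :
    M1Ph (n + 1) (M1Step s) := by
  obtain ⟨p, hd, e⟩ := s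
  rcases hPh with ⟨h1, h2, h3⟩ | ⟨h1, h2, h2', h3⟩ | ⟨h1, h2, h3⟩ |
    ⟨h1, h2, h3⟩ | ⟨h1, h2, h2', h3⟩ | ⟨h1, h2, h3⟩ <;>
      simp only at h1 h2 h3 <;> subst h1
  · -- R1
    rcases hPm (p + 1) with he | he
    · refine Or.inl ⟨?_, ?_, ?_⟩
      · simpa [M1Step] using he
      · simp [M1Step]
      · simp only [M1Step]; omega
    · refine Or.inr (Or.inl ⟨?_, ?_, ?_, ?_⟩)
      · simpa [M1Step] using he
      · simp [M1Step]
      · have : p + 1 - 1 ≠ p + 1 := by omega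
        simpa [M1Step, Function.update_apply, this] using h2
      · simp only [M1Step]; omega
  · -- R2
    refine Or.inr (Or.inr (Or.inl ⟨?_, ?_, ?_⟩))
    · have hpp : p + -1 = p - 1 := by ring
      simpa [M1Step, hpp] using h2'
    · have : p + -1 + 1 ≠ p + -1 := by omega
      have hpp : p + -1 + 1 = p := by ring
      simpa [M1Step, Function.update_apply, this, hpp] using h2
    · simp only [M1Step]; omega
  · -- R3
    refine Or.inl ⟨?_, ?_, ?_⟩
    · simpa [M1Step] using h2
    · simp [M1Step]
    · simp only [M1Step]; omega
  · -- L1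
    rcases hPm (p - 1) with he | he
    · refine Or.inr (Or.inr (Or.inr (Or.inr (Or.inl ⟨?_, ?_, ?_, ?_⟩))))
      · have hpp : p + -1 = p - 1 := by ring
        simpa [M1Step, hpp] using he
      · simp [M1Step]
      · have : p + -1 + 1 ≠ p + -1 := by omega
        have hpp : p + -1 + 1 = p := by ring
        simpa [M1Step, Function.update_apply, this, hpp] using h2
      · simp only [M1Step]; omega
    · refine Or.inr (Or.inr (Or.inr (Or.inl ⟨?_, ?_, ?_⟩)))
      · have hpp : p + -1 = p - 1 := by ring
        simpa [M1Step, hpp] using he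
      · simp [M1Step]
      · simp only [M1Step]; omega
  · -- L2
    refine Or.inr (Or.inr (Or.inr (Or.inr (Or.inr ⟨?_, ?_, ?_⟩))))
    · simpa [M1Step] using h2'
    · have : p + 1 - 1 ≠ p + 1 := by omega
      have hpp : p + 1 - 1 = p := by ring
      simpa [M1Step, Function.update_apply, this, hpp] using h2
    · simp only [M1Step]; omega
  · -- L3
    refine Or.inr (Or.inr (Or.inr (Or.inl ⟨?_, ?_, ?_⟩)))
    · have hpp : p + -1 = p - 1 := by ring
      simpa [M1Step, hpp] using h2
    · simp [M1Step]
    · simp only [M1Step]; omega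

lemma m1_base (h₀ : ℤ) (a₀ : ℤ → ℤ)
    (hh : h₀ = 1 ∨ h₀ = -1) (ha : ∀ x : ℤ, a₀ x = 1 ∨ a₀ x = -1) :
    M1Pm (M1Step ⟨0, h₀, a₀⟩) ∧ M1Ph 1 (M1Step ⟨0, h₀, a₀⟩) := by
  constructor
  · intro x
    simp only [M1Step, Function.update_apply]
    split_ifs
    · exact hh
    · exact ha x
  · rcases hh with hh | hh <;> subst hh
    · rcases ha 1 with h1 | h1
      · refine Or.inl ⟨?_, ?_, ?_⟩
        · simpa [M1Step] using h1
        · simp [M1Step]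
        · simp [M1Step]
      · rcases ha 0 with h0 | h0
        · refine Or.inr (Or.inl ⟨?_, ?_, ?_, ?_⟩)
          · simpa [M1Step] using h1
          · simp [M1Step]
          · have : (0:ℤ) + 1 - 1 ≠ 0 + 1 := by omega
            simpa [M1Step, Function.update_apply, this] using h0
          · simp [M1Step]
        · refine Or.inr (Or.inr (Or.inr (Or.inr (Or.inr ⟨?_, ?_, ?_⟩))))
          · simpa [M1Step] using h1
          · have : (0:ℤ) + 1 - 1 ≠ 0 + 1 := by omega
            simpa [M1Step, Function.update_apply, this] using h0
          · simp [M1Step]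
    · rcases ha (-1) with h1 | h1
      · rcases ha 0 with h0 | h0
        · refine Or.inr (Or.inr (Or.inl ⟨?_, ?_, ?_⟩))
          · have hpp : (0:ℤ) + -1 = -1 := by ring
            simpa [M1Step, hpp] using h1
          · have : (0:ℤ) + -1 + 1 ≠ 0 + -1 := by omega
            have hpp : (0:ℤ) + -1 + 1 = 0 := by ring
            simpa [M1Step, Function.update_apply, this, hpp] using h0
          · simp [M1Step]
        · refine Or.inr (Or.inr (Or.inr (Or.inr (Or.inl ⟨?_, ?_, ?_, ?_⟩))))
          · have hpp : (0:ℤ) + -1 = -1 := by ring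
            simpa [M1Step, hpp] using h1
          · simp [M1Step]
          · have : (0:ℤ) + -1 + 1 ≠ 0 + -1 := by omega
            have hpp : (0:ℤ) + -1 + 1 = 0 := by ring
            simpa [M1Step, Function.update_apply, this, hpp] using h0
          · simp [M1Step]
      · refine Or.inr (Or.inr (Or.inr (Or.inl ⟨?_, ?_, ?_⟩)))
        · have hpp : (0:ℤ) + -1 = -1 := by ring
          simpa [M1Step, hpp] using h1
        · simp [M1Step]
        · simp [M1Step]

lemma m1_key (h₀ : ℤ) (a₀ : ℤ → ℤ)
    (hh : h₀ = 1 ∨ h₀ = -1) (ha : ∀ x : ℤ, a₀ x = 1 ∨ a₀ x = -1) :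
    ∀ n : ℕ, 1 ≤ n →
      M1Pm (M1Step^[n] ⟨0, h₀, a₀⟩) ∧ M1Ph (n : ℤ) (M1Step^[n] ⟨0, h₀, a₀⟩) := by
  intro n hn
  induction n, hn using Nat.le_induction with
  | base => simpa using m1_base h₀ a₀ hh ha
  | succ n hn ih =>
    rw [Function.iterate_succ_apply']
    refine ⟨m1_pm_step ih.1 (m1_ph_hand ih.2), ?_⟩
    have := m1_ph_step ih.1 ih.2
    push_cast
    exact this

lemma m1_pos_bound (h₀ : ℤ) (a₀ : ℤ → ℤ)
    (hh : h₀ = 1 ∨ h₀ = -1) (ha : ∀ x : ℤ, a₀ x = 1 ∨ a₀ x = -1) (n : ℕ) :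
    (n : ℤ) ≤ 3 * (M1Step^[n] ⟨0, h₀, a₀⟩).pos.natAbs + 4 := by
  rcases Nat.eq_zero_or_pos n with h0 | h0
  · subst h0; simp
  · obtain ⟨-, hph⟩ := m1_key h₀ a₀ hh ha n h0
    set s := M1Step^[n] (⟨0, h₀, a₀⟩ : M1State)
    rcases hph with h | h | h | h | h | h <;>
      [skip; skip; skip; skip; skip; skip] <;>
      · have hb := h.2.2
        omega

/-- In the one-dimensional M1 model started at the origin with arrows in
`{-1,+1}`, the position after `n` steps satisfies `|Y n| ≥ ⌊(n-2)/3⌋`;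
in particular the walk is ballistic with speed at least `1/3`. -/
theorem m1_one_dim_ballistic (h₀ : ℤ) (a₀ : ℤ → ℤ)
    (hh : h₀ = 1 ∨ h₀ = -1) (ha : ∀ x : ℤ, a₀ x = 1 ∨ a₀ x = -1) :
    (∀ n : ℕ, ((n : ℤ) - 2) / 3 ≤ |(M1Step^[n] ⟨0, h₀, a₀⟩).pos|) ∧
    (1 : ℝ) / 3 ≤ Filter.liminf
      (fun n : ℕ => ((M1Step^[n] ⟨0, h₀, a₀⟩).pos.natAbs : ℝ) / (n : ℝ))
      Filter.atTop := by
  have key := m1_pos_bound h₀ a₀ hh ha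
  constructor
  · intro n
    have h := key n
    rw [Int.abs_eq_natAbs]
    omega
  · set u : ℕ → ℝ := fun n : ℕ => ((M1Step^[n] ⟨0, h₀, a₀⟩).pos.natAbs : ℝ) / (n : ℝ)
      with hu
    set g : ℕ → ℝ := fun n : ℕ => 1 / 3 - (4 / 3) * ((n : ℝ))⁻¹ with hg
    have hgt : Filter.Tendsto g Filter.atTop (nhds (1 / 3)) := by
      have h0 : Filter.Tendsto (fun n : ℕ => ((n : ℝ))⁻¹) Filter.atTop (nhds 0) :=
        tendsto_inv_atTop_nhds_zero_nat
      have := Filter.Tendsto.sub (tendsto_const_nhds (x := (1 : ℝ) / 3))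
        (h0.const_mul (4 / 3))
      simpa [hg, one_div] using this
    have hev : ∀ᶠ n in Filter.atTop, g n ≤ u n := by
      refine Filter.eventually_atTop.2 ⟨1, fun n hn => ?_⟩
      have hn0 : (0 : ℝ) < (n : ℝ) := by
        exact_mod_cast Nat.pos_of_ne_zero (by omega)
      have hkey : (n : ℝ) ≤ 3 * ((M1Step^[n] ⟨0, h₀, a₀⟩).pos.natAbs : ℝ) + 4 := by
        exact_mod_cast key n
      simp only [hu, hg]
      rw [sub_le_iff_le_add, div_add' _ _ _ hn0.ne', le_div_iff₀ hn0]
      have hinv : ((n : ℝ))⁻¹ * (n : ℝ) = 1 := inv_mul_cancel₀ hn0.ne'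
      nlinarith [hkey, hn0]
    have habs : ∀ n : ℕ, (M1Step^[n] (⟨0, h₀, a₀⟩ : M1State)).pos.natAbs ≤ n := by
      intro n
      induction n with
      | zero => simp [Function.iterate_zero]
      | succ n ih =>
        have hhand : (M1Step^[n] (⟨0, h₀, a₀⟩ : M1State)).hand = 1 ∨
            (M1Step^[n] (⟨0, h₀, a₀⟩ : M1State)).hand = -1 := by
          rcases Nat.eq_zero_or_pos n with h0 | h0
          · subst h0; simpa using hh
          · exact m1_ph_hand (m1_key h₀ a₀ hh ha n h0).2
        rw [Function.iterate_succ_apply']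
        simp only [M1Step]
        rcases hhand with h1 | h1 <;> rw [h1] <;> omega
    have hbound : Filter.IsBoundedUnder (· ≥ ·) Filter.atTop g := by
      refine ⟨-1, Filter.eventually_map.2 (Filter.Eventually.of_forall fun n => ?_)⟩
      have h1 : ((n : ℝ))⁻¹ ≤ 1 := by
        rcases Nat.eq_zero_or_pos n with h0 | h0
        · subst h0; norm_num
        · rw [inv_le_one_iff₀]; right; exact_mod_cast h0
      have h2 : (0:ℝ) ≤ ((n : ℝ))⁻¹ := by positivity
      simp only [hg]
      nlinarith
    have hcob : Filter.IsCoboundedUnder (· ≥ ·) Filter.atTop u := by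
      refine Filter.isCoboundedUnder_ge_of_le _ (x := 1) fun n => ?_
      simp only [hu]
      rcases Nat.eq_zero_or_pos n with h0 | h0
      · subst h0; simp
      · have hn0 : (0 : ℝ) < (n : ℝ) := by exact_mod_cast h0
        rw [div_le_one hn0]
        exact_mod_cast habs n
    calc (1 : ℝ) / 3 = Filter.liminf g Filter.atTop := hgt.liminf_eq.symm
      _ ≤ Filter.liminf u Filter.atTop := Filter.liminf_le_liminf hev hbound hcob
end

section
/- In the one-dimensional M1 dynamics, suppose that at time n the state is aligned, i.e. h_n = a_n(Y_n) = δ for some δ ∈ {−1,+1}. Then there exists k ∈ {1, 2, 3} such that Y_{n+k} = Y_n + δ, the state at time n+k is again aligned with the same direction (h_{n+k} = a_{n+k}(Y_{n+k}) = δ), and Y_{n+j} ∈ {Y_n, Y_n + δ} for all 0 ≤ j ≤ k. -/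
lemma m1_key_s1 (s : M1State) (δ : ℤ) (hδ : δ = 1 ∨ δ = -1)
    (hrange : s.env (s.pos + δ) = 1 ∨ s.env (s.pos + δ) = -1)
    (hhand : s.hand = δ) (hsite : s.env s.pos = δ) :
    ∃ k : ℕ, 1 ≤ k ∧ k ≤ 3 ∧
      (M1Step^[k] s).pos = s.pos + δ ∧
      (M1Step^[k] s).hand = δ ∧
      (M1Step^[k] s).env ((M1Step^[k] s).pos) = δ ∧
      ∀ j : ℕ, j ≤ k → (M1Step^[j] s).pos = s.pos ∨ (M1Step^[j] s).pos = s.pos + δ := by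
  have hδ0 : δ ≠ 0 := by rcases hδ with h|h <;> simp [h]
  have hne : s.pos + δ ≠ s.pos := by intro h; apply hδ0; linarith [h]
  by_cases hv : s.env (s.pos + δ) = δ
  · refine ⟨1, le_refl 1, by norm_num, ?_, ?_, ?_, ?_⟩
    · simp [M1Step, hhand]
    · simp [M1Step, hhand, hv]
    · simp [M1Step, hhand, Function.update_apply]
    · intro j hj
      interval_cases j
      · exact Or.inl rfl
      · right; simp [M1Step, hhand]
  · have hv' : s.env (s.pos + δ) = -δ := by
      rcases hδ with h'|h' <;> subst h' <;> rcases hrange with h|h <;> simp_all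
    have e1 : M1Step s = ⟨s.pos + δ, -δ, Function.update s.env (s.pos + δ) δ⟩ := by
      simp [M1Step, hhand, hv']
    have e2 : M1Step^[2] s = ⟨s.pos, δ, Function.update (Function.update s.env (s.pos + δ) δ) s.pos (-δ)⟩ := by
      rw [show (2:ℕ) = 1 + 1 from rfl, Function.iterate_add_apply, Function.iterate_one, e1]
      simp [M1Step, Function.update_apply, hne, hsite]
    have e3 : M1Step^[3] s = ⟨s.pos + δ, δ,
        Function.update (Function.update (Function.update s.env (s.pos + δ) δ) s.pos (-δ)) (s.pos + δ) δ⟩ := by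
      rw [show (3:ℕ) = 1 + 2 from rfl, Function.iterate_add_apply, Function.iterate_one, e2]
      simp [M1Step, Function.update_apply, hne]
    refine ⟨3, by norm_num, le_refl 3, ?_, ?_, ?_, ?_⟩
    · rw [e3]
    · rw [e3]
    · rw [e3]; simp [Function.update_apply]
    · intro j hj
      interval_cases j
      · exact Or.inl rfl
      · right; rw [Function.iterate_one, e1]
      · left; rw [e2]
      · right; rw [e3]

lemma m1_good_iter (x₀ h₀ : ℤ) (a₀ : ℤ → ℤ)
    (hh : h₀ = 1 ∨ h₀ = -1) (ha : ∀ x : ℤ, a₀ x = 1 ∨ a₀ x = -1) (n : ℕ) :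
    ((M1Step^[n] ⟨x₀, h₀, a₀⟩).hand = 1 ∨ (M1Step^[n] ⟨x₀, h₀, a₀⟩).hand = -1) ∧
    ∀ x : ℤ, (M1Step^[n] ⟨x₀, h₀, a₀⟩).env x = 1 ∨ (M1Step^[n] ⟨x₀, h₀, a₀⟩).env x = -1 := by
  induction n with
  | zero => exact ⟨hh, ha⟩
  | succ n ih =>
    obtain ⟨ih1, ih2⟩ := ih
    rw [Function.iterate_succ_apply']
    refine ⟨ih2 _, fun x => ?_⟩
    by_cases hx : x = (M1Step^[n] ⟨x₀, h₀, a₀⟩).pos + (M1Step^[n] ⟨x₀, h₀, a₀⟩).hand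
    · simp [M1Step, Function.update_apply, hx]; exact ih1
    · simp [M1Step, Function.update_apply, hx]; exact ih2 x

/-- If at time `n` the one-dimensional M1 dynamics is aligned (the hand arrow and
the arrow at the current site both equal `δ ∈ {-1,+1}`), then within `k ∈ {1,2,3}`
further steps the walker is at `Y n + δ`, is again aligned in direction `δ`, and in
the meantime never leaves `{Y n, Y n + δ}`. -/
theorem m1_aligned_progress (x₀ h₀ : ℤ) (a₀ : ℤ → ℤ)
    (hh : h₀ = 1 ∨ h₀ = -1) (ha : ∀ x : ℤ, a₀ x = 1 ∨ a₀ x = -1)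
    (n : ℕ) (δ : ℤ) (hδ : δ = 1 ∨ δ = -1)
    (hhand : (M1Step^[n] ⟨x₀, h₀, a₀⟩).hand = δ)
    (hsite : (M1Step^[n] ⟨x₀, h₀, a₀⟩).env ((M1Step^[n] ⟨x₀, h₀, a₀⟩).pos) = δ) :
    ∃ k : ℕ, 1 ≤ k ∧ k ≤ 3 ∧
      (M1Step^[n + k] ⟨x₀, h₀, a₀⟩).pos = (M1Step^[n] ⟨x₀, h₀, a₀⟩).pos + δ ∧
      (M1Step^[n + k] ⟨x₀, h₀, a₀⟩).hand = δ ∧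
      (M1Step^[n + k] ⟨x₀, h₀, a₀⟩).env ((M1Step^[n + k] ⟨x₀, h₀, a₀⟩).pos) = δ ∧
      ∀ j : ℕ, j ≤ k →
        (M1Step^[n + j] ⟨x₀, h₀, a₀⟩).pos = (M1Step^[n] ⟨x₀, h₀, a₀⟩).pos ∨
        (M1Step^[n + j] ⟨x₀, h₀, a₀⟩).pos = (M1Step^[n] ⟨x₀, h₀, a₀⟩).pos + δ := by
  obtain ⟨-, henv⟩ := m1_good_iter x₀ h₀ a₀ hh ha n
  obtain ⟨k, hk1, hk3, h1, h2, h3, h4⟩ :=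
    m1_key_s1 (M1Step^[n] ⟨x₀, h₀, a₀⟩) δ hδ (henv _) hhand hsite
  refine ⟨k, hk1, hk3, ?_, ?_, ?_, fun j hj => ?_⟩ <;>
    rw [add_comm n, Function.iterate_add_apply]
  · exact h1
  · exact h2
  · exact h3
  · exact h4 j hj
end

section
/- For every p ∈ 𝒫, every ε > 0, and every bounded measurable f : Ω → ℝ, one has ∫_Ω G_ε f dπ_p = 0 and ∫_Ω G̃_ε f dπ_p = 0; that is, the product measure π_p is stationary for the generators of both the M1_ε and M2_ε models. -/
open MeasureTheory

noncomputable section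

/-- The set `ℰ = {±e₁, …, ±e_d} ⊂ ℤ^d` of canonical unit vectors and their negatives. -/
def ArrowSet (d : ℕ) : Set (Fin d → ℤ) :=
  {v | ∃ i : Fin d, v = Pi.single i 1 ∨ v = Pi.single i (-1)}

/-- `Ω = ℰ^{ℤ^d_⋆}`, where `ℤ^d_⋆ = ℤ^d ∪ {⋆}` is encoded as `Option (Fin d → ℤ)`
with `none = ⋆`; it carries the product σ-algebra. -/
abbrev Env (d : ℕ) := Option (Fin d → ℤ) → ArrowSet d

/-- The hand-shift `τ_⋆`: `(τ_⋆ω)(x) = ω(x + ω(⋆))` for `x ∈ ℤ^d`, `(τ_⋆ω)(⋆) = ω(⋆)`. -/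
def tauStar {d : ℕ} (ω : Env d) : Env d := fun z =>
  match z with
  | none => ω none
  | some x => ω (some (x + (ω none).val))

/-- The shift `τ_e`: `(τ_eω)(x) = ω(x + e)` for `x ∈ ℤ^d`, `(τ_eω)(⋆) = ω(⋆)`. -/
def tauE {d : ℕ} (e : Fin d → ℤ) (ω : Env d) : Env d := fun z =>
  match z with
  | none => ω none
  | some x => ω (some (x + e))

/-- The swap `σ`: `(σω)(0) = ω(⋆)`, `(σω)(⋆) = ω(0)`, `(σω)(x) = ω(x)` otherwise. -/
def swapMap {d : ℕ} (ω : Env d) : Env d := fun z =>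
  match z with
  | none => ω (some 0)
  | some x => if x = 0 then ω none else ω (some x)

/-- `T[τ]f(ω) = f(σ(τω)) − f(ω)` (step by `τ`, then swap, at rate 1). -/
def Tgen {d : ℕ} (τ : Env d → Env d) (f : Env d → ℝ) (ω : Env d) : ℝ :=
  f (swapMap (τ ω)) - f ω

/-- `T̃[τ]f(ω) = ¼f(τω) + ¼f(σ(τω)) + ¼f(τ(σω)) + ¼f(σ(τ(σω))) − f(ω)`
(swaps with probability ½ before and after the step). -/
def Ttil {d : ℕ} (τ : Env d → Env d) (f : Env d → ℝ) (ω : Env d) : ℝ :=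
  (1 / 4) * f (τ ω) + (1 / 4) * f (swapMap (τ ω)) + (1 / 4) * f (τ (swapMap ω))
    + (1 / 4) * f (swapMap (τ (swapMap ω))) - f ω

/-- `U = (1/(2d)) Σ_{e ∈ ℰ} T̃[τ_e]`. -/
def Ugen {d : ℕ} (f : Env d → ℝ) (ω : Env d) : ℝ :=
  (1 / (2 * (d : ℝ))) * ∑ i : Fin d,
    (Ttil (tauE (Pi.single i 1)) f ω + Ttil (tauE (Pi.single i (-1))) f ω)

/-- The generator `G_ε = T[τ_⋆] + εU` of the `M1_ε` model. -/
def Geps {d : ℕ} (ε : ℝ) (f : Env d → ℝ) (ω : Env d) : ℝ :=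
  Tgen tauStar f ω + ε * Ugen f ω

/-- The generator `G̃_ε = T̃[τ_⋆] + εU` of the `M2_ε` model. -/
def GepsTil {d : ℕ} (ε : ℝ) (f : Env d → ℝ) (ω : Env d) : ℝ :=
  Ttil tauStar f ω + ε * Ugen f ω

/-- The arrow `+e_i` as an element of `ℰ`. -/
def arrowPos (d : ℕ) (i : Fin d) : ArrowSet d := ⟨Pi.single i 1, ⟨i, Or.inl rfl⟩⟩

/-- The arrow `-e_i` as an element of `ℰ`. -/
def arrowNeg (d : ℕ) (i : Fin d) : ArrowSet d := ⟨Pi.single i (-1), ⟨i, Or.inr rfl⟩⟩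

/-- The measure `μ_p` on `ℰ` with `μ_p(+e_i) = μ_p(−e_i) = p_i/2`. -/
def muP {d : ℕ} (p : Fin d → ℝ) : Measure (ArrowSet d) :=
  ∑ i : Fin d, ENNReal.ofReal (p i / 2) •
    (Measure.dirac (arrowPos d i) + Measure.dirac (arrowNeg d i))

/-- `π` is the product measure `⊗_{x ∈ ℤ^d_⋆} μ_p` on `Ω`: it assigns to every
cylinder set the corresponding product of `μ_p`-measures. -/
def IsProductMeasure {d : ℕ} (p : Fin d → ℝ) (π : Measure (Env d)) : Prop :=
  ∀ (S : Finset (Option (Fin d → ℤ))) (A : Option (Fin d → ℤ) → Set (ArrowSet d)),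
    (∀ z, MeasurableSet (A z)) →
    π {ω : Env d | ∀ z ∈ S, ω z ∈ A z} = ∏ z ∈ S, muP p (A z)

/-! ### Auxiliary material for the proof -/

open scoped ENNReal

namespace Stat

variable {d : ℕ}

/-- A cylinder ("box") set. -/
def box (S : Finset (Option (Fin d → ℤ))) (A : Option (Fin d → ℤ) → Set (ArrowSet d)) :
    Set (Env d) := {ω | ∀ z ∈ S, ω z ∈ A z}

lemma measurableSet_box {S : Finset (Option (Fin d → ℤ))} {A : Option (Fin d → ℤ) → Set (ArrowSet d)}
    (hA : ∀ z, MeasurableSet (A z)) : MeasurableSet (box S A) := by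
  have : box S A = ⋂ z ∈ S, (fun ω : Env d => ω z) ⁻¹' A z := by
    ext ω; simp [box]
  rw [this]
  exact MeasurableSet.biInter S.countable_toSet fun z _ => measurable_pi_apply z (hA z)

def boxes (d : ℕ) : Set (Set (Env d)) :=
  {B | ∃ S A, (∀ z, MeasurableSet (A z)) ∧ B = box S A}

lemma isPiSystem_boxes : IsPiSystem (boxes d) := by
  rintro _ ⟨S, A, hA, rfl⟩ _ ⟨T, B, hB, rfl⟩ -
  refine ⟨S ∪ T, fun z => (if z ∈ S then A z else Set.univ) ∩ (if z ∈ T then B z else Set.univ),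
    fun z => by simp only []; split_ifs <;> simp [hA z, hB z, (hA z).inter (hB z)], ?_⟩
  ext ω
  simp only [box, Set.mem_inter_iff, Set.mem_setOf_eq, Finset.mem_union]
  constructor
  · rintro ⟨h1, h2⟩ z hz
    constructor <;> split_ifs with h <;> simp_all
  · intro h
    constructor <;> intro z hz
    · have := (h z (Or.inl hz)).1; rwa [if_pos hz] at this
    · have := (h z (Or.inr hz)).2; rwa [if_pos hz] at this

lemma generateFrom_boxes :
    (inferInstance : MeasurableSpace (Env d)) = .generateFrom (boxes d) := by
  refine le_antisymm ?_ (MeasurableSpace.generateFrom_le ?_)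
  · show (⨆ z : Option (Fin d → ℤ),
      (inferInstance : MeasurableSpace (ArrowSet d)).comap fun ω : Env d => ω z) ≤ _
    refine iSup_le fun z => ?_
    rintro s ⟨t, ht, rfl⟩
    refine MeasurableSpace.measurableSet_generateFrom ⟨{z}, fun _ => t, fun _ => ht, ?_⟩
    ext ω; simp [box]
  · rintro _ ⟨S, A, hA, rfl⟩
    exact measurableSet_box hA

lemma muP_univ {p : Fin d → ℝ} (hp0 : ∀ i, 0 ≤ p i) (hpsum : ∑ i, p i = 1) :
    muP p Set.univ = 1 := by
  have : ∀ i : Fin d, ENNReal.ofReal (p i / 2) * (1 + 1) = ENNReal.ofReal (p i) := by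
    intro i
    rw [show (1 + 1 : ℝ≥0∞) = ENNReal.ofReal 2 by simp [ENNReal.ofReal]; norm_num,
      ← ENNReal.ofReal_mul (div_nonneg (hp0 i) (by norm_num)), div_mul_cancel₀]
    norm_num
  simp only [muP, Measure.finset_sum_apply, Measure.smul_apply, Measure.add_apply,
    Measure.dirac_apply' _ MeasurableSet.univ, Set.indicator_univ, Pi.one_apply, smul_eq_mul, this]
  rw [← ENNReal.ofReal_sum_of_nonneg (fun i _ => hp0 i), hpsum, ENNReal.ofReal_one]

lemma tsum_muP_singleton_inter (p : Fin d → ℝ) (C : Set (ArrowSet d)) (hC : MeasurableSet C) :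
    ∑' v : ArrowSet d, muP p ({v} ∩ C) = muP p C := by
  rw [← measure_iUnion (fun v w hvw => Set.disjoint_left.mpr (by
      rintro x ⟨hx1, -⟩ ⟨hx2, -⟩
      exact hvw (by simp_all)))
    (fun v => (measurableSet_singleton v).inter hC)]
  congr 1
  ext x; simp

lemma prod_of_comp {p : Fin d → ℝ} {π : Measure (Env d)} (hπ : IsProductMeasure p π)
    {g : Option (Fin d → ℤ) → Option (Fin d → ℤ)} (hg : Function.Injective g)
    (S : Finset (Option (Fin d → ℤ))) (A : Option (Fin d → ℤ) → Set (ArrowSet d))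
    (hA : ∀ z, MeasurableSet (A z)) :
    π {ω : Env d | ∀ z ∈ S, ω (g z) ∈ A z} = ∏ z ∈ S, muP p (A z) := by
  have key : {ω : Env d | ∀ z ∈ S, ω (g z) ∈ A z}
      = {ω : Env d | ∀ y ∈ S.image g, ω y ∈ A (Function.invFun g y)} := by
    ext ω
    simp only [Set.mem_setOf_eq, Finset.mem_image]
    constructor
    · rintro h y ⟨z, hz, rfl⟩
      rw [Function.leftInverse_invFun hg z]
      exact h z hz
    · intro h z hz
      have := h (g z) ⟨z, hz, rfl⟩
      rwa [Function.leftInverse_invFun hg z] at this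
  rw [key, hπ _ _ (fun y => hA _), Finset.prod_image (fun a _ b _ h => hg h)]
  exact Finset.prod_congr rfl fun z hz => by rw [Function.leftInverse_invFun hg z]

/-! Index bijections realising the maps. -/

def sIdx : Option (Fin d → ℤ) → Option (Fin d → ℤ)
  | none => some 0
  | some x => if x = 0 then none else some x

def tIdx (e : Fin d → ℤ) : Option (Fin d → ℤ) → Option (Fin d → ℤ)
  | none => none
  | some x => some (x + e)

def psi (v : ArrowSet d) : Option (Fin d → ℤ) → Option (Fin d → ℤ)
  | none => some v.val
  | some x => if x = 0 then none else some (x + v.val)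

lemma sIdx_inj : Function.Injective (sIdx (d := d)) := by
  intro a b hab
  match a, b with
  | none, none => rfl
  | none, some x => by_cases hx : x = 0 <;> simp_all [sIdx, hx]
  | some x, none => by_cases hx : x = 0 <;> simp_all [sIdx, hx]
  | some x, some y =>
    by_cases hx : x = 0 <;> by_cases hy : y = 0 <;> simp_all [sIdx, hx, hy]

lemma tIdx_inj (e : Fin d → ℤ) : Function.Injective (tIdx (d := d) e) := by
  intro a b hab
  match a, b with
  | none, none => rfl
  | none, some x => simp [tIdx] at hab
  | some x, none => simp [tIdx] at hab
  | some x, some y => simp only [tIdx, Option.some.injEq] at hab; simp [add_right_cancel hab]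

lemma psi_inj (v : ArrowSet d) : Function.Injective (psi v) := by
  intro a b hab
  match a, b with
  | none, none => rfl
  | none, some x => by_cases hx : x = 0 <;> simp_all [psi, hx]
  | some x, none => by_cases hx : x = 0 <;> simp_all [psi, hx]
  | some x, some y =>
    by_cases hx : x = 0 <;> by_cases hy : y = 0 <;> simp_all [psi, hx, hy]

lemma psi_eq_none_iff (v : ArrowSet d) (z : Option (Fin d → ℤ)) :
    psi v z = none ↔ z = some 0 := by
  match z with
  | none => simp [psi]
  | some x => by_cases hx : x = 0 <;> simp [psi, hx]

lemma swapMap_apply (ω : Env d) (z : Option (Fin d → ℤ)) : swapMap ω z = ω (sIdx z) := by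
  match z with
  | none => rfl
  | some x => by_cases hx : x = 0 <;> simp [swapMap, sIdx, hx]

lemma tauE_apply (e : Fin d → ℤ) (ω : Env d) (z : Option (Fin d → ℤ)) :
    tauE e ω z = ω (tIdx e z) := by
  match z with
  | none => rfl
  | some x => rfl

lemma phiStar_apply (ω : Env d) (z : Option (Fin d → ℤ)) :
    swapMap (tauStar ω) z = ω (psi (ω none) z) := by
  match z with
  | none => show tauStar ω (some 0) = _; simp [tauStar, psi]
  | some x => by_cases hx : x = 0 <;> simp [swapMap, tauStar, psi, hx]

lemma swapMap_involutive : Function.Involutive (swapMap (d := d)) := by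
  intro ω
  funext z
  match z with
  | none => simp [swapMap]
  | some x => by_cases hx : x = 0 <;> simp [swapMap, hx]

/-! Measurability of the maps. -/

lemma measurable_swapMap : Measurable (swapMap (d := d)) := by
  apply measurable_pi_lambda
  intro z
  match z with
  | none => exact measurable_pi_apply (some 0)
  | some x =>
    by_cases hx : x = 0
    · simpa [swapMap, hx] using measurable_pi_apply (none : Option (Fin d → ℤ))
    · simpa [swapMap, hx] using measurable_pi_apply (some x)

lemma measurable_tauE (e : Fin d → ℤ) : Measurable (tauE (d := d) e) := by
  apply measurable_pi_lambda
  intro z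
  match z with
  | none => exact measurable_pi_apply none
  | some x => exact measurable_pi_apply (some (x + e))

lemma measurable_tauStar : Measurable (tauStar (d := d)) := by
  apply measurable_pi_lambda
  intro z
  match z with
  | none => exact measurable_pi_apply none
  | some x =>
    apply measurable_to_countable'
    intro v
    have hset : (fun ω : Env d => tauStar ω (some x)) ⁻¹' {v} =
        ⋃ w : ArrowSet d, ((fun ω : Env d => ω none) ⁻¹' {w}) ∩
          ((fun ω : Env d => ω (some (x + w.val))) ⁻¹' {v}) := by
      ext ω
      simp only [Set.mem_preimage, Set.mem_singleton_iff, Set.mem_iUnion, Set.mem_inter_iff,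
        tauStar]
      constructor
      · intro h; exact ⟨ω none, rfl, h⟩
      · rintro ⟨w, hw, h⟩; rw [hw]; exact h
    rw [hset]
    exact MeasurableSet.iUnion fun w =>
      ((measurable_pi_apply (none : Option (Fin d → ℤ))) (measurableSet_singleton w)).inter
        ((measurable_pi_apply (some (x + w.val))) (measurableSet_singleton v))

/-! The main measure computation for `σ ∘ τ_⋆`. -/

lemma map_phiStar_box {p : Fin d → ℝ} {π : Measure (Env d)} (hπ : IsProductMeasure p π)
    (hp0 : ∀ i, 0 ≤ p i) (hpsum : ∑ i, p i = 1)
    (S : Finset (Option (Fin d → ℤ))) (A : Option (Fin d → ℤ) → Set (ArrowSet d))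
    (hA : ∀ z, MeasurableSet (A z)) :
    π ((fun ω => swapMap (tauStar ω)) ⁻¹' box S A) = ∏ z ∈ S, muP p (A z) := by
  classical
  set C : Set (ArrowSet d) := if some 0 ∈ S then A (some 0) else Set.univ with hCdef
  have hCmeas : MeasurableSet C := by
    rw [hCdef]; split_ifs; exacts [hA _, MeasurableSet.univ]
  set T := S.erase (some (0 : Fin d → ℤ)) with hT
  set B : ArrowSet d → Option (Fin d → ℤ) → Set (ArrowSet d) := fun v y =>
    if y = none then {v} ∩ C else A (Function.invFun (psi v) y) with hB
  have hBmeas : ∀ v y, MeasurableSet (B v y) := by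
    intro v y
    rw [hB]; dsimp only; split_ifs
    · exact (measurableSet_singleton v).inter hCmeas
    · exact hA _
  set S' : ArrowSet d → Finset (Option (Fin d → ℤ)) := fun v => insert none (T.image (psi v))
    with hS'
  have hpsiTnone : ∀ (v : ArrowSet d) {z}, z ∈ T → psi v z ≠ none := by
    intro v z hz h
    exact Finset.ne_of_mem_erase hz ((psi_eq_none_iff v z).mp h)
  have hnone_notMem : ∀ v : ArrowSet d, none ∉ T.image (psi v) := by
    intro v h
    obtain ⟨z, hz, hz2⟩ := Finset.mem_image.mp h
    exact hpsiTnone v hz hz2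
  have hdecomp : (fun ω : Env d => swapMap (tauStar ω)) ⁻¹' box S A
      = ⋃ v : ArrowSet d, box (S' v) (B v) := by
    ext ω
    simp only [Set.mem_preimage, Set.mem_iUnion, box, Set.mem_setOf_eq]
    constructor
    · intro h
      refine ⟨ω none, fun y hy => ?_⟩
      rcases Finset.mem_insert.mp hy with rfl | hy'
      · rw [hB]; dsimp only; rw [if_pos rfl]
        refine ⟨rfl, ?_⟩
        rw [hCdef]; split_ifs with h0
        · have := h (some 0) h0
          rw [phiStar_apply] at this
          simpa [psi] using this
        · trivial
      · obtain ⟨z, hz, rfl⟩ := Finset.mem_image.mp hy'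
        rw [hB]; dsimp only; rw [if_neg (hpsiTnone _ hz),
          Function.leftInverse_invFun (psi_inj _) z]
        have := h z (Finset.mem_of_mem_erase hz)
        rwa [phiStar_apply] at this
    · rintro ⟨v, hv⟩
      have hnone := hv none (Finset.mem_insert_self _ _)
      rw [hB] at hnone; dsimp only at hnone; rw [if_pos rfl] at hnone
      obtain ⟨hv1, hv2⟩ := hnone
      have hveq : ω none = v := hv1
      intro z hz
      rw [phiStar_apply, hveq]
      by_cases hz0 : z = some (0 : Fin d → ℤ)
      · subst hz0
        have hpsi0 : psi v (some (0 : Fin d → ℤ)) = none := by simp [psi]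
        rw [hpsi0]
        rw [hCdef, if_pos hz] at hv2
        exact hv2
      · have hzT : z ∈ T := Finset.mem_erase.mpr ⟨hz0, hz⟩
        have := hv (psi v z) (Finset.mem_insert_of_mem (Finset.mem_image_of_mem _ hzT))
        rw [hB] at this; dsimp only at this
        rw [if_neg (hpsiTnone v hzT), Function.leftInverse_invFun (psi_inj v) z] at this
        exact this
  have hdisj : Pairwise (Function.onFun Disjoint fun v : ArrowSet d => box (S' v) (B v)) := by
    intro v w hvw
    refine Set.disjoint_left.mpr fun ω hωv hωw => hvw ?_
    have h1 := hωv none (Finset.mem_insert_self _ _)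
    have h2 := hωw none (Finset.mem_insert_self _ _)
    rw [hB] at h1 h2; dsimp only at h1 h2; rw [if_pos rfl] at h1 h2
    exact h1.1 ▸ h2.1
  have hterm : ∀ v : ArrowSet d,
      π (box (S' v) (B v)) = muP p ({v} ∩ C) * ∏ z ∈ T, muP p (A z) := by
    intro v
    have h0 : π (box (S' v) (B v)) = ∏ y ∈ S' v, muP p (B v y) := hπ _ _ (hBmeas v)
    rw [h0, hS']; dsimp only
    rw [Finset.prod_insert (hnone_notMem v)]
    have hb0 : B v none = {v} ∩ C := by rw [hB]; dsimp only; rw [if_pos rfl]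
    rw [hb0, Finset.prod_image (fun a _ b _ h => psi_inj v h)]
    congr 1
    refine Finset.prod_congr rfl fun z hz => ?_
    rw [hB]; dsimp only
    rw [if_neg (hpsiTnone v hz), Function.leftInverse_invFun (psi_inj v) z]
  rw [hdecomp, measure_iUnion hdisj (fun v => measurableSet_box (hBmeas v))]
  calc ∑' v : ArrowSet d, π (box (S' v) (B v))
      = ∑' v : ArrowSet d, muP p ({v} ∩ C) * ∏ z ∈ T, muP p (A z) := tsum_congr hterm
    _ = (∑' v : ArrowSet d, muP p ({v} ∩ C)) * ∏ z ∈ T, muP p (A z) := ENNReal.tsum_mul_right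
    _ = muP p C * ∏ z ∈ T, muP p (A z) := by rw [tsum_muP_singleton_inter p C hCmeas]
    _ = ∏ z ∈ S, muP p (A z) := by
        rw [hCdef]
        split_ifs with h0
        · rw [hT]; exact Finset.mul_prod_erase S (fun z => muP p (A z)) h0
        · rw [muP_univ hp0 hpsum, one_mul, hT, Finset.erase_eq_of_notMem h0]

/-! Uniqueness of the product measure and invariance. -/

lemma map_eq_self {p : Fin d → ℝ} {π : Measure (Env d)} (hπ : IsProductMeasure p π)
    {Φ : Env d → Env d} (hΦ : Measurable Φ)
    (hbox : ∀ S A, (∀ z, MeasurableSet (A z)) → π (Φ ⁻¹' box S A) = ∏ z ∈ S, muP p (A z)) :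
    π.map Φ = π := by
  have huniv : π Set.univ = 1 := by
    have h := hπ ∅ (fun _ => Set.univ) (fun _ => MeasurableSet.univ)
    simpa using h
  haveI : IsFiniteMeasure π := ⟨by rw [huniv]; exact ENNReal.one_lt_top⟩
  refine ext_of_generate_finite (boxes d) generateFrom_boxes isPiSystem_boxes ?_ ?_
  · rintro s ⟨S, A, hA, rfl⟩
    rw [Measure.map_apply hΦ (measurableSet_box hA), hbox S A hA]
    exact (hπ S A hA).symm
  · rw [Measure.map_apply hΦ MeasurableSet.univ]
    simp

section Int

variable {π : Measure (Env d)} [IsFiniteMeasure π]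

lemma integrable_bdd {f : Env d → ℝ} (hf : Measurable f) {C : ℝ} (hC : ∀ ω, |f ω| ≤ C) :
    Integrable f π :=
  ⟨hf.aestronglyMeasurable,
    HasFiniteIntegral.of_bounded (C := C)
      (Filter.Eventually.of_forall (by simpa [Real.norm_eq_abs] using hC))⟩

lemma integral_comp_eq {Φ : Env d → Env d} (hΦ : Measurable Φ) (hmap : π.map Φ = π)
    {f : Env d → ℝ} (hf : Measurable f) :
    ∫ ω, f (Φ ω) ∂π = ∫ ω, f ω ∂π := by
  rw [← integral_map hΦ.aemeasurable hf.aestronglyMeasurable, hmap]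

end Int

end Stat

/-- Stationarity: for every `p ∈ 𝒫`, every `ε > 0` and every bounded measurable
`f : Ω → ℝ`, one has `∫ G_ε f dπ_p = 0` and `∫ G̃_ε f dπ_p = 0`. -/
theorem productMeasure_stationary (d : ℕ) (hd : 0 < d)
    (p : Fin d → ℝ) (hp0 : ∀ i, 0 ≤ p i) (hp1 : ∀ i, p i ≤ 1)
    (hpsum : ∑ i, p i = 1)
    (ε : ℝ) (hε : 0 < ε)
    (π : Measure (Env d)) (hπ : IsProductMeasure p π)
    (f : Env d → ℝ) (hmeas : Measurable f) (hbdd : ∃ C : ℝ, ∀ ω, |f ω| ≤ C) :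
    (∫ ω, Geps ε f ω ∂π) = 0 ∧ (∫ ω, GepsTil ε f ω ∂π) = 0 := by
  classical
  obtain ⟨C, hC⟩ := hbdd
  have huniv : π Set.univ = 1 := by
    have h := hπ ∅ (fun _ => Set.univ) (fun _ => MeasurableSet.univ)
    simpa using h
  haveI : IsFiniteMeasure π := ⟨by rw [huniv]; exact ENNReal.one_lt_top⟩
  -- invariance of π under the relevant maps
  have hσ : π.map swapMap = π := by
    refine Stat.map_eq_self hπ Stat.measurable_swapMap fun S A hA => ?_
    have hpre : swapMap ⁻¹' Stat.box S A = {ω : Env d | ∀ z ∈ S, ω (Stat.sIdx z) ∈ A z} := by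
      ext ω
      simp only [Set.mem_preimage, Stat.box, Set.mem_setOf_eq]
      exact forall₂_congr fun z hz => by rw [Stat.swapMap_apply ω z]
    rw [hpre]
    exact Stat.prod_of_comp hπ Stat.sIdx_inj S A hA
  have hτe : ∀ e : Fin d → ℤ, π.map (tauE e) = π := by
    intro e
    refine Stat.map_eq_self hπ (Stat.measurable_tauE e) fun S A hA => ?_
    have hpre : tauE e ⁻¹' Stat.box S A = {ω : Env d | ∀ z ∈ S, ω (Stat.tIdx e z) ∈ A z} := by
      ext ω
      simp only [Set.mem_preimage, Stat.box, Set.mem_setOf_eq]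
      exact forall₂_congr fun z hz => by rw [Stat.tauE_apply e ω z]
    rw [hpre]
    exact Stat.prod_of_comp hπ (Stat.tIdx_inj e) S A hA
  have hφmeas : Measurable (fun ω : Env d => swapMap (tauStar ω)) :=
    Stat.measurable_swapMap.comp Stat.measurable_tauStar
  have hφ : π.map (fun ω : Env d => swapMap (tauStar ω)) = π :=
    Stat.map_eq_self hπ hφmeas (Stat.map_phiStar_box hπ hp0 hpsum)
  have comp_inv : ∀ {Φ Ψ : Env d → Env d}, Measurable Φ → Measurable Ψ →
      π.map Φ = π → π.map Ψ = π → π.map (Φ ∘ Ψ) = π := by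
    intro Φ Ψ hΦ hΨ h1 h2
    rw [← Measure.map_map hΦ hΨ, h2, h1]
  have hts : π.map tauStar = π := by
    have hrw : tauStar (d := d) = swapMap ∘ (fun ω : Env d => swapMap (tauStar ω)) := by
      funext ω
      exact (Stat.swapMap_involutive (tauStar ω)).symm
    rw [hrw]
    exact comp_inv Stat.measurable_swapMap hφmeas hσ hφ
  -- bounded-measurable integration facts
  have intf : Integrable f π := Stat.integrable_bdd hmeas hC
  have intg_comp : ∀ {Φ : Env d → Env d}, Measurable Φ →
      Integrable (fun ω => f (Φ ω)) π := fun hΦ =>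
    Stat.integrable_bdd (hmeas.comp hΦ) (fun ω => hC _)
  have int_comp : ∀ {Φ : Env d → Env d}, Measurable Φ → π.map Φ = π →
      ∫ ω, f (Φ ω) ∂π = ∫ ω, f ω ∂π := fun hΦ hm => Stat.integral_comp_eq hΦ hm hmeas
  -- integral of Ttil vanishes for any measure-preserving τ
  have hIntTtil : ∀ (τ : Env d → Env d), Measurable τ →
      Integrable (fun ω => Ttil τ f ω) π := by
    intro τ hτ
    have hτσ : Measurable (fun ω : Env d => τ (swapMap ω)) := hτ.comp Stat.measurable_swapMap
    have I1 : Integrable (fun ω => (1 / 4 : ℝ) * f (τ ω)) π := (intg_comp hτ).const_mul _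
    have I2 : Integrable (fun ω => (1 / 4 : ℝ) * f (swapMap (τ ω))) π :=
      (intg_comp (Stat.measurable_swapMap.comp hτ)).const_mul _
    have I3 : Integrable (fun ω => (1 / 4 : ℝ) * f (τ (swapMap ω))) π :=
      (intg_comp hτσ).const_mul _
    have I4 : Integrable (fun ω => (1 / 4 : ℝ) * f (swapMap (τ (swapMap ω)))) π :=
      (intg_comp (Stat.measurable_swapMap.comp hτσ)).const_mul _
    exact (((I1.add I2).add I3).add I4).sub intf
  have hTtil : ∀ (τ : Env d → Env d), Measurable τ → π.map τ = π →
      ∫ ω, Ttil τ f ω ∂π = 0 := by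
    intro τ hτ hτm
    have hτσ : Measurable (fun ω : Env d => τ (swapMap ω)) := hτ.comp Stat.measurable_swapMap
    have hστ : Measurable (fun ω : Env d => swapMap (τ ω)) := Stat.measurable_swapMap.comp hτ
    have hστσ : Measurable (fun ω : Env d => swapMap (τ (swapMap ω))) :=
      Stat.measurable_swapMap.comp hτσ
    have m1 : π.map (fun ω : Env d => swapMap (τ ω)) = π :=
      comp_inv Stat.measurable_swapMap hτ hσ hτm
    have m2 : π.map (fun ω : Env d => τ (swapMap ω)) = π :=
      comp_inv hτ Stat.measurable_swapMap hτm hσ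
    have m3 : π.map (fun ω : Env d => swapMap (τ (swapMap ω))) = π :=
      comp_inv Stat.measurable_swapMap hτσ hσ m2
    have e1 : ∫ ω, f (τ ω) ∂π = ∫ ω, f ω ∂π := int_comp hτ hτm
    have e2 : ∫ ω, f (swapMap (τ ω)) ∂π = ∫ ω, f ω ∂π := int_comp hστ m1
    have e3 : ∫ ω, f (τ (swapMap ω)) ∂π = ∫ ω, f ω ∂π := int_comp hτσ m2
    have e4 : ∫ ω, f (swapMap (τ (swapMap ω))) ∂π = ∫ ω, f ω ∂π := int_comp hστσ m3
    have I1 : Integrable (fun ω => (1 / 4 : ℝ) * f (τ ω)) π := (intg_comp hτ).const_mul _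
    have I2 : Integrable (fun ω => (1 / 4 : ℝ) * f (swapMap (τ ω))) π :=
      (intg_comp hστ).const_mul _
    have I3 : Integrable (fun ω => (1 / 4 : ℝ) * f (τ (swapMap ω))) π :=
      (intg_comp hτσ).const_mul _
    have I4 : Integrable (fun ω => (1 / 4 : ℝ) * f (swapMap (τ (swapMap ω)))) π :=
      (intg_comp hστσ).const_mul _
    have IS12 : Integrable (fun ω => (1 / 4 : ℝ) * f (τ ω)
        + (1 / 4 : ℝ) * f (swapMap (τ ω))) π := I1.add I2
    have IS123 : Integrable (fun ω => (1 / 4 : ℝ) * f (τ ω)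
        + (1 / 4 : ℝ) * f (swapMap (τ ω)) + (1 / 4 : ℝ) * f (τ (swapMap ω))) π := IS12.add I3
    have IS : Integrable (fun ω => (1 / 4 : ℝ) * f (τ ω)
        + (1 / 4 : ℝ) * f (swapMap (τ ω)) + (1 / 4 : ℝ) * f (τ (swapMap ω))
        + (1 / 4 : ℝ) * f (swapMap (τ (swapMap ω)))) π := IS123.add I4
    simp only [Ttil]
    rw [integral_sub IS intf, integral_add IS123 I4, integral_add IS12 I3, integral_add I1 I2,
      integral_const_mul, integral_const_mul, integral_const_mul, integral_const_mul,
      e1, e2, e3, e4]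
    ring
  -- integral of Tgen vanishes
  have hTgen : ∫ ω, Tgen tauStar f ω ∂π = 0 := by
    have e : ∫ ω, f (swapMap (tauStar ω)) ∂π = ∫ ω, f ω ∂π := int_comp hφmeas hφ
    simp only [Tgen]
    rw [integral_sub (intg_comp hφmeas) intf, e, sub_self]
  -- integral of Ugen vanishes
  have hIntU : Integrable (fun ω => Ugen f ω) π := by
    simp only [Ugen]
    exact (integrable_finset_sum _ (fun i _ =>
      (hIntTtil _ (Stat.measurable_tauE _)).add (hIntTtil _ (Stat.measurable_tauE _)))).const_mul _
  have hU : ∫ ω, Ugen f ω ∂π = 0 := by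
    simp only [Ugen]
    have hIS : ∀ i : Fin d, Integrable (fun ω =>
        Ttil (tauE (Pi.single i 1)) f ω + Ttil (tauE (Pi.single i (-1))) f ω) π := fun i =>
      (hIntTtil _ (Stat.measurable_tauE _)).add (hIntTtil _ (Stat.measurable_tauE _))
    rw [integral_const_mul, integral_finset_sum Finset.univ (fun i _ => hIS i)]
    have hzero : ∀ i ∈ (Finset.univ : Finset (Fin d)),
        ∫ ω, (Ttil (tauE (Pi.single i 1)) f ω + Ttil (tauE (Pi.single i (-1))) f ω) ∂π = 0 := by
      intro i _
      rw [integral_add (hIntTtil _ (Stat.measurable_tauE _)) (hIntTtil _ (Stat.measurable_tauE _)),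
        hTtil _ (Stat.measurable_tauE _) (hτe _), hTtil _ (Stat.measurable_tauE _) (hτe _),
        add_zero]
    rw [Finset.sum_congr rfl hzero]
    simp
  have hIntTgen : Integrable (fun ω => Tgen tauStar f ω) π := by
    simp only [Tgen]
    exact (intg_comp hφmeas).sub intf
  constructor
  · simp only [Geps]
    rw [integral_add hIntTgen (hIntU.const_mul ε), hTgen, integral_const_mul _ _, hU]
    ring
  · simp only [GepsTil]
    rw [integral_add (hIntTtil _ Stat.measurable_tauStar) (hIntU.const_mul ε),
      hTtil _ Stat.measurable_tauStar hts, integral_const_mul _ _, hU]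
    ring

end
end

section
/- There exists a constant c > 0 such that for every λ ∈ (0, 1) and every I ≥ 1, ∫_{[0,1]²} (λ + p₁² + p₂² + I p₁²)^{−1} dp ≥ c · log(1/λ) / √I. In particular, taking I of order log(1/λ) the integral is bounded below by a constant multiple of √(log(1/λ)); this is the integral estimate giving the superdiffusive lower bound Ê(λ) = Ω(λ^{−2}√(log(1/λ))) in the totally anisotropic two-dimensional case. -/
open MeasureTheory Real Set

set_option maxHeartbeats 1000000 in
/-- The integral estimate behind the superdiffusive lower bound
`Ê(λ) = Ω(λ^{-2}√(log(1/λ)))` in the totally anisotropic two-dimensional case: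
there is `c > 0` such that for all `λ ∈ (0,1)` and all `I ≥ 1`,
`∫_{[0,1]²} (λ + p₁² + p₂² + I p₁²)⁻¹ dp ≥ c log(1/λ)/√I`. -/
theorem two_dim_anisotropic_integral_estimate :
    ∃ c : ℝ, 0 < c ∧
      ∀ lam : ℝ, lam ∈ Set.Ioo (0 : ℝ) 1 → ∀ I : ℝ, 1 ≤ I →
        c * Real.log (1 / lam) / Real.sqrt I
          ≤ ∫ p in (Set.Icc (0:ℝ) 1) ×ˢ (Set.Icc (0:ℝ) 1),
              (lam + p.1 ^ 2 + p.2 ^ 2 + I * p.1 ^ 2)⁻¹ := by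
  refine ⟨1/15, by norm_num, ?_⟩
  rintro lam ⟨hl, hl1⟩ I hI
  set a := Real.sqrt (1 + I) with ha
  have hIpos : (0:ℝ) < 1 + I := by linarith
  have ha2 : a ^ 2 = 1 + I := Real.sq_sqrt hIpos.le
  have hapos : 0 < a := Real.sqrt_pos.mpr hIpos
  have ha1 : 1 ≤ a := by nlinarith [hapos]
  set K := 5 * (1 + I) with hK
  have hKpos : 0 < K := by positivity
  set b := 1 / (2 * a) with hb
  have hbpos : 0 < b := by positivity
  have hb1 : b ≤ 1 := by
    rw [hb, div_le_one (by positivity)]; linarith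
  set M : Set (ℝ × ℝ) := {q : ℝ × ℝ | a * q.1 < q.2 ∧ q.2 < 2 * a * q.1} with hM
  have hMmeas : MeasurableSet M :=
    (measurableSet_lt (measurable_fst.const_mul a) measurable_snd).inter
      (measurableSet_lt measurable_snd (measurable_fst.const_mul (2 * a)))
  set h : ℝ × ℝ → ℝ := M.indicator (fun q => (lam + K * q.1 ^ 2)⁻¹) with hh
  set f : ℝ × ℝ → ℝ := fun p => (lam + p.1 ^ 2 + p.2 ^ 2 + I * p.1 ^ 2)⁻¹ with hf
  have hfpos : ∀ p : ℝ × ℝ, 0 < lam + p.1 ^ 2 + p.2 ^ 2 + I * p.1 ^ 2 := by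
    intro p; nlinarith [sq_nonneg p.1, sq_nonneg p.2]
  have hfcont : Continuous f := by
    apply Continuous.inv₀
    · fun_prop
    · intro p; exact (hfpos p).ne'
  have hfint : ∀ s t : Set ℝ, IsCompact s → IsCompact t → IntegrableOn f (s ×ˢ t) := by
    intro s t hs ht
    exact hfcont.continuousOn.integrableOn_compact (hs.prod ht)
  have hhmeas : Measurable h :=
    Measurable.indicator (by fun_prop (disch := intro p; positivity)) hMmeas
  have hhint : IntegrableOn h ((Icc (0:ℝ) b) ×ˢ (Icc (0:ℝ) 1)) := by
    apply Measure.integrableOn_of_bounded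
      ((isCompact_Icc.prod isCompact_Icc).measure_lt_top).ne
      hhmeas.aestronglyMeasurable (M := lam⁻¹)
    filter_upwards with p
    rw [hh, Real.norm_eq_abs, Set.indicator_apply]
    split_ifs with hp
    · rw [abs_of_nonneg (by positivity)]
      apply inv_anti₀ hl
      nlinarith [sq_nonneg p.1]
    · simp [abs_of_nonneg, inv_nonneg.mpr hl.le]
  -- step 1: h ≤ f on the small rectangle, and the small rectangle is inside the big one
  have step1 : ∫ p in (Icc (0:ℝ) b) ×ˢ (Icc (0:ℝ) 1), h p
      ≤ ∫ p in (Set.Icc (0:ℝ) 1) ×ˢ (Set.Icc (0:ℝ) 1), f p := by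
    calc ∫ p in (Icc (0:ℝ) b) ×ˢ (Icc (0:ℝ) 1), h p
        ≤ ∫ p in (Icc (0:ℝ) b) ×ˢ (Icc (0:ℝ) 1), f p := by
          apply setIntegral_mono_on hhint (hfint _ _ isCompact_Icc isCompact_Icc)
            ((measurableSet_Icc).prod measurableSet_Icc)
          rintro ⟨x, y⟩ ⟨⟨hx0, hxb⟩, ⟨hy0, hy1⟩⟩
          rw [hh, Set.indicator_apply]
          split_ifs with hp
          · obtain ⟨hp1, hp2⟩ := hp
            apply inv_anti₀ (hfpos (x, y))
            have hy2 : y ^ 2 ≤ 4 * a ^ 2 * x ^ 2 := by nlinarith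
            rw [ha2] at hy2
            simp only [hK]
            nlinarith
          · positivity
      _ ≤ ∫ p in (Set.Icc (0:ℝ) 1) ×ˢ (Set.Icc (0:ℝ) 1), f p := by
          apply setIntegral_mono_set (hfint _ _ isCompact_Icc isCompact_Icc)
          · filter_upwards with p; rw [hf]; positivity
          · apply HasSubset.Subset.eventuallyLE
            exact Set.prod_mono (Set.Icc_subset_Icc le_rfl hb1) le_rfl
  -- step 2: compute ∫ h over the small rectangle via Fubini
  have step2 : ∫ p in (Icc (0:ℝ) b) ×ˢ (Icc (0:ℝ) 1), h p
      = ∫ x in Icc (0:ℝ) b, a * x * (lam + K * x ^ 2)⁻¹ := by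
    rw [MeasureTheory.Measure.volume_eq_prod, setIntegral_prod h (by
      rwa [← MeasureTheory.Measure.volume_eq_prod])]
    apply setIntegral_congr_fun measurableSet_Icc
    rintro x ⟨hx0, hxb⟩
    have hax1 : 2 * a * x ≤ 1 := by
      rw [hb, le_div_iff₀ (by positivity)] at hxb
      linarith [hxb]
    have hinner : ∀ y : ℝ, h (x, y)
        = (Ioo (a * x) (2 * a * x)).indicator (fun _ => (lam + K * x ^ 2)⁻¹) y := by
      intro y
      rw [hh]
      by_cases hy : y ∈ Ioo (a * x) (2 * a * x)
      · rw [Set.indicator_of_mem hy, Set.indicator_of_mem (by exact ⟨hy.1, hy.2⟩)]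
      · rw [Set.indicator_of_notMem hy, Set.indicator_of_notMem (by
          intro hc; exact hy ⟨hc.1, hc.2⟩)]
    simp_rw [hinner]
    rw [setIntegral_indicator measurableSet_Ioo,
      Set.inter_eq_self_of_subset_right (Set.Ioo_subset_Icc_self.trans
        (Set.Icc_subset_Icc (by positivity) hax1)),
      setIntegral_const, Real.volume_real_Ioo_of_le (by nlinarith), smul_eq_mul]
    ring
  -- step 3: compute the 1-d integral by FTC
  have step3 : ∫ x in Icc (0:ℝ) b, a * x * (lam + K * x ^ 2)⁻¹
      = a / (2 * K) * Real.log (lam + K * b ^ 2) - a / (2 * K) * Real.log lam := by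
    have ftc : ∀ x ∈ Set.uIcc (0:ℝ) b, HasDerivAt
        (fun x => a / (2 * K) * Real.log (lam + K * x ^ 2))
        (a * x * (lam + K * x ^ 2)⁻¹) x := by
      intro x _
      have hden : 0 < lam + K * x ^ 2 := by positivity
      have h1 : HasDerivAt (fun x : ℝ => lam + K * x ^ 2) (K * (2 * x)) x := by
        have := ((hasDerivAt_pow 2 x).const_mul K).const_add lam
        simpa using this
      have h3 := ((Real.hasDerivAt_log hden.ne').comp x h1).const_mul (a / (2 * K))
      refine h3.congr_deriv ?_
      field_simp
    have hcont : ContinuousOn (fun x : ℝ => a * x * (lam + K * x ^ 2)⁻¹)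
        (Set.uIcc 0 b) := by
      apply ContinuousOn.mul (by fun_prop)
      apply ContinuousOn.inv₀ (by fun_prop)
      intro x _; positivity
    rw [MeasureTheory.integral_Icc_eq_integral_Ioc,
      ← intervalIntegral.integral_of_le hbpos.le,
      intervalIntegral.integral_eq_sub_of_hasDerivAt ftc
        (hcont.intervalIntegrable)]
    simp
  -- step 4: arithmetic
  have hKb : K * b ^ 2 = 5 / 4 := by
    rw [hK, hb]
    field_simp
    nlinarith [ha2]
  have hlog1 : 0 ≤ Real.log (lam + K * b ^ 2) := by
    apply Real.log_nonneg; rw [hKb]; linarith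
  have hlogL : Real.log (1 / lam) = -Real.log lam := by
    rw [one_div, Real.log_inv]
  have hLpos : 0 < Real.log (1 / lam) := by
    rw [one_div]
    exact Real.log_pos (by rw [lt_inv_comm₀ one_pos hl]; simpa using hl1)
  have haK : a / (2 * K) = 1 / (10 * a) := by
    rw [hK, ← ha2]; field_simp; ring
  have hsqI : 0 < Real.sqrt I := Real.sqrt_pos.mpr (by linarith)
  have haI : 10 * a ≤ 15 * Real.sqrt I := by
    have h2 : a ≤ Real.sqrt 2 * Real.sqrt I := by
      rw [ha, ← Real.sqrt_mul (by norm_num)]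
      exact Real.sqrt_le_sqrt (by linarith)
    have hs2 : Real.sqrt 2 ≤ 3 / 2 := by
      have h := Real.sqrt_le_sqrt (show (2:ℝ) ≤ (3/2)^2 by norm_num)
      rwa [Real.sqrt_sq (by norm_num : (0:ℝ) ≤ 3/2)] at h
    have h3 : Real.sqrt 2 * Real.sqrt I ≤ 3/2 * Real.sqrt I :=
      mul_le_mul_of_nonneg_right hs2 hsqI.le
    linarith
  have key : (1:ℝ)/15 ≤ Real.sqrt I / (10 * a) := by
    rw [div_le_div_iff₀ (by norm_num) (by positivity)]
    linarith
  calc 1 / 15 * Real.log (1 / lam) / Real.sqrt I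
      ≤ (Real.sqrt I / (10 * a)) * Real.log (1 / lam) / Real.sqrt I := by
        gcongr
    _ = 1 / (10 * a) * Real.log (1 / lam) := by
        field_simp
    _ ≤ a / (2 * K) * (Real.log (lam + K * b ^ 2) - Real.log lam) := by
        rw [haK]
        apply mul_le_mul_of_nonneg_left _ (by positivity)
        linarith [hlogL, hlog1]
    _ = ∫ x in Icc (0:ℝ) b, a * x * (lam + K * x ^ 2)⁻¹ := by rw [step3]; ring
    _ = ∫ p in (Icc (0:ℝ) b) ×ˢ (Icc (0:ℝ) 1), h p := step2.symm
    _ ≤ _ := step1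
end
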